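/- arXiv:2605.20776 — 2 statements merged into one kernel-verified Lean document; each statement's English description precedes it below -/
import Mathlib

section
/- Let H be a fixed finite-dimensional complex Hilbert space, let ρ⃗ = {ρ_n} be a sequence of density operators on H^{⊗n}, and let S⃗ = {S_n} be a sequence of sets of density operators on H^{⊗n} satisfying Axioms 1–4. Then for every ε ∈ [0,1), liminf_{n→∞} −(1/n) log β_ε(ρ_n‖S_n) is at most inf over sequences σ⃗ = {σ_n} with σ_n ∈ S_n for all n of B(ε|ρ⃗‖σ⃗). -/
open Filter Matrix
open scoped Classical ComplexOrder

noncomputable section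

section Defs

variable {ι : Type*} [Fintype ι] [DecidableEq ι]

/-- A density operator: a positive semidefinite operator with unit trace. -/
def IsDensityOp (A : Matrix ι ι ℂ) : Prop := A.PosSemidef ∧ A.trace = 1

/-- A test (POVM element): an operator `T` with `0 ≤ T ≤ I`. -/
def IsTest (T : Matrix ι ι ℂ) : Prop :=
  T.PosSemidef ∧ ((1 : Matrix ι ι ℂ) - T).PosSemidef

/-- An orthogonal projection: a Hermitian idempotent operator. -/
def IsOrthProj (P : Matrix ι ι ℂ) : Prop := P.IsHermitian ∧ P * P = P

/-- The orthogonal projection `{X ≥ 0}` onto the direct sum of eigenspaces of a Hermitian `X`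
with nonnegative eigenvalues (junk value `0` if `X` is not Hermitian). -/
def nnProj (X : Matrix ι ι ℂ) : Matrix ι ι ℂ :=
  if hX : X.IsHermitian then
    (hX.eigenvectorUnitary : Matrix ι ι ℂ) *
      (Matrix.diagonal fun i => if 0 ≤ hX.eigenvalues i then (1 : ℂ) else 0) *
      star (hX.eigenvectorUnitary : Matrix ι ι ℂ)
  else 0

/-- The type-I error `Tr[(I - {ρ - μ σ ≥ 0}) ρ]` of the spectral test. -/
def specErr (ρ σ : Matrix ι ι ℂ) (μ : ℝ) : ℝ :=
  (((1 : Matrix ι ι ℂ) - nnProj (ρ - (μ : ℂ) • σ)) * ρ).trace.re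

/-- Optimal ε-achievable type-II error `β_ε(ρ‖S)` against a set `S` of states. -/
def betaSet (ε : ℝ) (ρ : Matrix ι ι ℂ) (S : Set (Matrix ι ι ℂ)) : ℝ :=
  sInf {x : ℝ | ∃ T : Matrix ι ι ℂ, IsTest T ∧
    (((1 : Matrix ι ι ℂ) - T) * ρ).trace.re ≤ ε ∧
    x = sSup {y : ℝ | ∃ σ ∈ S, y = (T * σ).trace.re}}

/-- `log` of a Hermitian matrix via the functional calculus (with `Real.log 0 = 0`
on the kernel); junk value `0` if not Hermitian. -/
def hermLog (X : Matrix ι ι ℂ) : Matrix ι ι ℂ :=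
  if hX : X.IsHermitian then
    (hX.eigenvectorUnitary : Matrix ι ι ℂ) *
      (Matrix.diagonal fun i => (Real.log (hX.eigenvalues i) : ℂ)) *
      star (hX.eigenvectorUnitary : Matrix ι ι ℂ)
  else 0

/-- Support inclusion `supp ρ ⊆ supp σ`, expressed as kernel inclusion `ker σ ⊆ ker ρ`. -/
def SuppLE (ρ σ : Matrix ι ι ℂ) : Prop :=
  ∀ v : ι → ℂ, σ.mulVec v = 0 → ρ.mulVec v = 0

/-- Umegaki quantum relative entropy `D(ρ‖σ) = Tr[ρ(log ρ - log σ)]` if `supp ρ ⊆ supp σ`,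
and `+∞` otherwise. -/
def relEnt (ρ σ : Matrix ι ι ℂ) : EReal :=
  if SuppLE ρ σ then (((ρ * (hermLog ρ - hermLog σ)).trace.re : ℝ) : EReal) else ⊤

/-- The spectral projection of a Hermitian matrix onto the eigenspace of eigenvalue `μ`. -/
def eigProjAt (X : Matrix ι ι ℂ) (μ : ℝ) : Matrix ι ι ℂ :=
  if hX : X.IsHermitian then
    (hX.eigenvectorUnitary : Matrix ι ι ℂ) *
      (Matrix.diagonal fun i => if hX.eigenvalues i = μ then (1 : ℂ) else 0) *
      star (hX.eigenvectorUnitary : Matrix ι ι ℂ)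
  else 0

/-- The number of distinct eigenvalues of a Hermitian matrix. -/
def distinctEigCount (X : Matrix ι ι ℂ) : ℕ :=
  if hX : X.IsHermitian then (Finset.univ.image hX.eigenvalues).card else 0

/-- The pinching map with respect to `σ`: `ρ ↦ Σ_μ Π_μ ρ Π_μ` over the distinct
eigenvalues `μ` of `σ`. -/
def pinch (σ ρ : Matrix ι ι ℂ) : Matrix ι ι ℂ :=
  if hσ : σ.IsHermitian then
    ∑ μ ∈ Finset.univ.image hσ.eigenvalues, eigProjAt σ μ * ρ * eigProjAt σ μ
  else ρ

/-- The amplification `id_k ⊗ Φ` of a linear map on operators. -/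
def ampl (k : ℕ) (Φ : Matrix ι ι ℂ →ₗ[ℂ] Matrix ι ι ℂ)
    (M : Matrix (Fin k × ι) (Fin k × ι) ℂ) : Matrix (Fin k × ι) (Fin k × ι) ℂ :=
  Matrix.of fun p q => Φ (Matrix.of fun x y => M (p.1, x) (q.1, y)) p.2 q.2

/-- Complete positivity: every amplification `id_k ⊗ Φ` maps positive semidefinite
operators to positive semidefinite operators. -/
def IsCP (Φ : Matrix ι ι ℂ →ₗ[ℂ] Matrix ι ι ℂ) : Prop :=
  ∀ k : ℕ, ∀ M : Matrix (Fin k × ι) (Fin k × ι) ℂ, M.PosSemidef → (ampl k Φ M).PosSemidef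

/-- Trace preservation. -/
def IsTP (Φ : Matrix ι ι ℂ →ₗ[ℂ] Matrix ι ι ℂ) : Prop :=
  ∀ X : Matrix ι ι ℂ, (Φ X).trace = X.trace

end Defs

section SeqDefs

variable {Hn : ℕ → Type*} [∀ n, Fintype (Hn n)] [∀ n, DecidableEq (Hn n)]

/-- The spectral inf-divergence rate `D̲(ε|ρ⃗‖σ⃗)`. -/
def Dlow (ε : ℝ) (ρ σ : (n : ℕ) → Matrix (Hn n) (Hn n) ℂ) : EReal :=
  sSup ((fun a : ℝ => (a : EReal)) ''
    {a : ℝ | Filter.limsup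
      (fun n : ℕ => specErr (ρ n) (σ n) (Real.exp (n * a))) Filter.atTop ≤ ε})

/-- The supremum ε-achievable type-II error exponent `B(ε|ρ⃗‖σ⃗)`. -/
def Bexp (ε : ℝ) (ρ σ : (n : ℕ) → Matrix (Hn n) (Hn n) ℂ) : EReal :=
  sSup {x : EReal | ∃ T : (n : ℕ) → Matrix (Hn n) (Hn n) ℂ,
    (∀ n, IsTest (T n)) ∧
    Filter.limsup
      (fun n : ℕ => (((1 : Matrix (Hn n) (Hn n) ℂ) - T n) * ρ n).trace.re)
      Filter.atTop ≤ ε ∧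
    x = Filter.liminf
      (fun n : ℕ => ((↑(-(1 / (n : ℝ)) * Real.log ((T n * σ n).trace.re))) : EReal))
      Filter.atTop}

end SeqDefs

section TensorDefs

variable {H : Type*} [Fintype H] [DecidableEq H]

/-- The IID tensor power `A^{⊗n}`, acting on `H^{⊗n}` modeled with index type `Fin n → H`. -/
def tpow (A : Matrix H H ℂ) (n : ℕ) : Matrix (Fin n → H) (Fin n → H) ℂ :=
  Matrix.of fun x y => ∏ k : Fin n, A (x k) (y k)

/-- Tensor product of operators on `H^{⊗n}` and `H^{⊗m}`, as an operator on `H^{⊗(n+m)}`. -/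
def mTensor {n m : ℕ} (A : Matrix (Fin n → H) (Fin n → H) ℂ)
    (B : Matrix (Fin m → H) (Fin m → H) ℂ) :
    Matrix (Fin (n + m) → H) (Fin (n + m) → H) ℂ :=
  Matrix.of fun x y =>
    A (fun k => x (Fin.castAdd m k)) (fun k => y (Fin.castAdd m k)) *
      B (fun k => x (Fin.natAdd n k)) (fun k => y (Fin.natAdd n k))

end TensorDefs

/-- Classical spectral inf-divergence rate (with vanishing type-I error) for sequences of
(finitely supported) distributions on `ℕ`. -/
def cDlow (ρ σ : ℕ → ℕ → ℝ) : EReal :=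
  sSup ((fun a : ℝ => (a : EReal)) ''
    {a : ℝ | Filter.limsup
      (fun n : ℕ => ∑' x : ℕ, if ρ n x < Real.exp (n * a) * σ n x then ρ n x else 0)
      Filter.atTop = 0})

/-! Fix `σ⃗` with `σ_n ∈ S_n`. A test that is `ε`-good for `ρ_n` and nearly optimal against all
of `S_n` has `Tr[T σ_n] < 2 β_ε(ρ_n‖S_n)`. Mixing it with `β_ε / 2` times the identity keeps its
type-I error below `ε` and pins `Tr[T σ_n]` between `β_ε / 2` and `3 β_ε`, so its exponent against
`σ_n` is at least `-(1/n) log β_ε - (log 3)/n` (if `β_ε` is `0` or at least `1`, the trivial test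
`T = I` already does this); the correction vanishes in the `liminf`. -/

namespace Matrix

variable {ι : Type*} [Fintype ι]

lemma PosSemidef.re_trace_mul_nonneg {A B : Matrix ι ι ℂ} (hA : A.PosSemidef)
    (hB : B.PosSemidef) : 0 ≤ (A * B).trace.re := by
  obtain ⟨C, rfl⟩ : ∃ C : Matrix ι ι ℂ, B = star C * C := by
    open scoped MatrixOrder in exact CStarAlgebra.nonneg_iff_eq_star_mul_self.mp hB.nonneg
  rw [← Matrix.mul_assoc, Matrix.trace_mul_comm, ← Matrix.mul_assoc]
  exact (Complex.nonneg_iff.mp (hA.mul_mul_conjTranspose_same C).trace_nonneg).1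

end Matrix

section Tests

variable {ι : Type*} [DecidableEq ι]

lemma isTest_one : IsTest (1 : Matrix ι ι ℂ) :=
  ⟨Matrix.PosSemidef.one, by simpa using Matrix.PosSemidef.zero⟩

lemma IsTest.re_trace_mul_le_one [Fintype ι] {T σ : Matrix ι ι ℂ} (hT : IsTest T)
    (hσ : IsDensityOp σ) :    (T * σ).trace.re ≤ 1 := by
  have h := hT.2.re_trace_mul_nonneg hσ.1
  rw [Matrix.sub_mul, Matrix.one_mul, Matrix.trace_sub, hσ.2, Complex.sub_re,
    Complex.one_re] at h
  linarith

lemma one_sub_smul_add_smul_one (T : Matrix ι ι ℂ) (a : ℝ) :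
    1 - ((1 - a) • T + a • 1) = (1 - a) • (1 - T) := by
  simp only [smul_sub, sub_smul, one_smul]
  abel

lemma IsTest.smul_add_smul_one {T : Matrix ι ι ℂ} (hT : IsTest T) {a : ℝ} (ha0 : 0 ≤ a)
    (ha1 : a ≤ 1) :
    IsTest ((1 - a) • T + a • 1) := by
  refine ⟨(hT.1.smul (sub_nonneg.2 ha1)).add (Matrix.PosSemidef.one.smul ha0), ?_⟩
  rw [one_sub_smul_add_smul_one]
  exact hT.2.smul (sub_nonneg.2 ha1)

lemma re_trace_smul_add_smul_one_mul [Fintype ι] (T ρ : Matrix ι ι ℂ) (a : ℝ) :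
    (((1 - a) • T + a • 1) * ρ).trace.re = (1 - a) * (T * ρ).trace.re + a * ρ.trace.re := by
  simp [Matrix.add_mul, Matrix.trace_add]

end Tests

section Beta

variable {ι : Type*} [Fintype ι] [DecidableEq ι] {ε : ℝ} {ρ σ : Matrix ι ι ℂ}
  {S : Set (Matrix ι ι ℂ)}

lemma betaSet_nonneg (hS : ∀ σ ∈ S, IsDensityOp σ) : 0 ≤ betaSet ε ρ S := by
  refine Real.sInf_nonneg ?_
  rintro _ ⟨T, hT, -, rfl⟩
  refine Real.sSup_nonneg ?_
  rintro _ ⟨σ, hσ, rfl⟩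
  exact hT.1.re_trace_mul_nonneg (hS σ hσ).1

lemma exists_isTest_re_trace_mul_lt_of_betaSet_lt (hS : ∀ σ ∈ S, IsDensityOp σ)
    (hβ : 0 < betaSet ε ρ S) {c : ℝ} (hc : betaSet ε ρ S < c) :
    ∃ T, IsTest T ∧ ((1 - T) * ρ).trace.re ≤ ε ∧ ∀ σ ∈ S, (T * σ).trace.re < c := by
  unfold betaSet at hβ hc
  obtain ⟨_, ⟨T, hT, herr, rfl⟩, hlt⟩ := exists_lt_of_csInf_lt
    (Set.nonempty_iff_ne_empty.2 fun h => by simp [h] at hβ) hc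
  have hbdd : BddAbove {y | ∃ σ ∈ S, y = (T * σ).trace.re} := by
    refine ⟨1, ?_⟩
    rintro _ ⟨σ, hσ, rfl⟩
    exact hT.re_trace_mul_le_one (hS σ hσ)
  exact ⟨T, hT, herr, fun σ hσ => (le_csSup hbdd ⟨σ, hσ, rfl⟩).trans_lt hlt⟩

lemma exists_isTest_log_re_trace_mul_le (hρ : ρ.PosSemidef) (hS : ∀ σ ∈ S, IsDensityOp σ)
    (hσ : σ ∈ S) (hε : 0 ≤ ε) :
    ∃ T, IsTest T ∧ ((1 - T) * ρ).trace.re ≤ ε ∧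
      Real.log (T * σ).trace.re ≤ Real.log 3 + Real.log (betaSet ε ρ S) := by
  set β := betaSet ε ρ S
  have hβ0 : 0 ≤ β := betaSet_nonneg hS
  by_cases hβ : 0 < β ∧ β < 1
  · obtain ⟨T, hT, herr, hlt⟩ :=
      exists_isTest_re_trace_mul_lt_of_betaSet_lt hS hβ.1 (c := 2 * β) (by linarith)
    -- Mixing in `β / 2` of the identity keeps `Tr[T σ] ≥ β / 2`, away from the junk `log 0 = 0`.
    refine ⟨(1 - β / 2) • T + (β / 2) • 1,
      hT.smul_add_smul_one (by linarith) (by linarith), ?_, ?_⟩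
    · rw [one_sub_smul_add_smul_one, Matrix.smul_mul, Matrix.trace_smul, Complex.smul_re,
        smul_eq_mul]
      nlinarith [hT.2.re_trace_mul_nonneg hρ]
    · have htr := re_trace_smul_add_smul_one_mul T σ (β / 2)
      rw [(hS σ hσ).2, Complex.one_re, mul_one] at htr
      have hTσ := hT.1.re_trace_mul_nonneg (hS σ hσ).1
      have hTσ_lt := hlt σ hσ
      calc Real.log _ ≤ Real.log (3 * β) :=
            Real.log_le_log (by rw [htr]; nlinarith) (by rw [htr]; nlinarith)
        _ = Real.log 3 + Real.log β := Real.log_mul (by norm_num) hβ.1.ne'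
  · refine ⟨1, isTest_one, by simpa using hε, ?_⟩
    rw [Matrix.one_mul, (hS σ hσ).2, Complex.one_re, Real.log_one]
    have hlogβ : 0 ≤ Real.log β := by
      rcases hβ0.eq_or_lt with h | h
      · rw [← h, Real.log_zero]
      · exact Real.log_nonneg (not_lt.1 (hβ ⟨h, ·⟩))
    have hlog3 : 0 ≤ Real.log 3 := Real.log_nonneg (by norm_num)
    linarith

end Beta

lemma EReal.liminf_coe_le_of_le_add {α : Type*} {f : Filter α} [f.NeBot] {u v w : α → ℝ}
    (h : ∀ᶠ x in f, u x ≤ v x + w x) (hw : Tendsto w f (nhds 0)) :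
    liminf (fun x => (u x : EReal)) f ≤ liminf (fun x => (v x : EReal)) f := by
  have hw' : limsup (fun x => (w x : EReal)) f = 0 :=
    ((continuous_coe_real_ereal.tendsto 0).comp hw).limsup_eq
  calc liminf (fun x => (u x : EReal)) f
      ≤ liminf ((fun x => (w x : EReal)) + fun x => (v x : EReal)) f :=
        liminf_le_liminf (h.mono fun x hx => by
          simp only [Pi.add_apply]; exact_mod_cast hx.trans_eq (add_comm _ _))
    _ ≤ limsup (fun x => (w x : EReal)) f + liminf (fun x => (v x : EReal)) f :=
        EReal.liminf_add_le (by simp [hw']) (by simp [hw'])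
    _ = liminf (fun x => (v x : EReal)) f := by rw [hw', zero_add]

theorem stmt10_general {H : Type*} [Fintype H] [DecidableEq H]
    (ρ : (n : ℕ) → Matrix (Fin n → H) (Fin n → H) ℂ) (hρ : ∀ n, IsDensityOp (ρ n))
    (S : (n : ℕ) → Set (Matrix (Fin n → H) (Fin n → H) ℂ))
    (hS2 : ∀ n, 1 ≤ n → (∀ σn ∈ S n, IsDensityOp σn) ∧ IsCompact (S n))
    (ε : ℝ) (hε0 : 0 ≤ ε) :
    Filter.liminf
        (fun n : ℕ => ((↑(-(1 / (n : ℝ)) * Real.log (betaSet ε (ρ n) (S n)))) : EReal))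
        Filter.atTop
      ≤ sInf {x : EReal | ∃ σ : (n : ℕ) → Matrix (Fin n → H) (Fin n → H) ℂ,
          (∀ n, 1 ≤ n → σ n ∈ S n) ∧ x = Bexp ε ρ σ} := by
  refine le_sInf ?_
  rintro _ ⟨σ, hσ, rfl⟩
  have key : ∀ n : ℕ, ∃ T, IsTest T ∧ ((1 - T) * ρ n).trace.re ≤ ε ∧
      (1 ≤ n → Real.log (T * σ n).trace.re ≤
        Real.log 3 + Real.log (betaSet ε (ρ n) (S n))) := by
    intro n
    by_cases hn : 1 ≤ n
    · obtain ⟨T, hT, herr, hlog⟩ :=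
        exists_isTest_log_re_trace_mul_le (hρ n).1 (hS2 n hn).1 (hσ n hn) hε0
      exact ⟨T, hT, herr, fun _ => hlog⟩
    · exact ⟨1, isTest_one, by simpa using hε0, fun h => absurd h hn⟩
  choose T hT herr hlog using key
  have hlimsup : limsup (fun n => ((1 - T n) * ρ n).trace.re) atTop ≤ ε :=
    limsup_le_of_le (isBoundedUnder_of ⟨0, fun n => (hT n).2.re_trace_mul_nonneg (hρ n).1⟩
      |>.isCoboundedUnder_flip) (.of_forall herr)
  calc _ ≤ liminf (fun n : ℕ =>
          ((-(1 / (n : ℝ)) * Real.log (T n * σ n).trace.re : ℝ) : EReal)) atTop := by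
        refine EReal.liminf_coe_le_of_le_add (w := fun n : ℕ => Real.log 3 / n) ?_
          (tendsto_const_div_atTop_nhds_zero_nat _)
        filter_upwards [eventually_ge_atTop 1] with n hn
        have := mul_le_mul_of_nonneg_left (hlog n hn) (one_div_nonneg.2 (Nat.cast_nonneg n))
        rw [div_eq_mul_one_div (Real.log 3) n]
        linarith
    _ ≤ Bexp ε ρ σ := le_sSup ⟨T, hT, hlimsup, rfl⟩

/-- **Left inequality.** For `ε ∈ [0,1)`,
`liminf_n −(1/n) log β_ε(ρ_n‖S_n) ≤ inf_{σ⃗∈S⃗} B(ε|ρ⃗‖σ⃗)`. -/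
theorem stmt10 {H : Type*} [Fintype H] [DecidableEq H]
    (ρ : (n : ℕ) → Matrix (Fin n → H) (Fin n → H) ℂ) (hρ : ∀ n, IsDensityOp (ρ n))
    (S : (n : ℕ) → Set (Matrix (Fin n → H) (Fin n → H) ℂ))
    (hS1 : ∃ σf ∈ S 1, IsDensityOp σf ∧ σf.PosDef)
    (hS2 : ∀ n, 1 ≤ n → (∀ σn ∈ S n, IsDensityOp σn) ∧ IsCompact (S n))
    (hS3 : ∀ n m, 1 ≤ n → 1 ≤ m → ∀ a ∈ S n, ∀ b ∈ S m, mTensor a b ∈ S (n + m))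
    (hS4 : ∀ n, 1 ≤ n → Convex ℝ (S n))
    (ε : ℝ) (hε0 : 0 ≤ ε) (hε1 : ε < 1) :
    Filter.liminf
        (fun n : ℕ => ((↑(-(1 / (n : ℝ)) * Real.log (betaSet ε (ρ n) (S n)))) : EReal))
        Filter.atTop
      ≤ sInf {x : EReal | ∃ σ : (n : ℕ) → Matrix (Fin n → H) (Fin n → H) ℂ,
          (∀ n, 1 ≤ n → σ n ∈ S n) ∧ x = Bexp ε ρ σ} :=
  stmt10_general ρ hρ S hS2 ε hε0
end
end

section
/- Let ρ⃗ = {ρ_n} and σ⃗ = {σ_n} be sequences of density operators on finite-dimensional complex Hilbert spaces H_n, let d_n denote the number of distinct eigenvalues of σ_n, and suppose that (1/n)·log d_n → 0 as n → ∞. Let E_n be the pinching map with respect to σ_n and E(ρ⃗) = {E_n(ρ_n)}. Then for every ε ∈ [0,1], D̲(ε|ρ⃗‖σ⃗) ≤ D̲(ε|E(ρ⃗)‖σ⃗). -/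
open Filter Matrix
open scoped Classical ComplexOrder

noncomputable section

/-!
Fix `b < a` and put `ν = e^{na}`, `c = e^{nb}`, `Q = {ρ - νσ ≥ 0}`, `R = I - {E(ρ) - cσ ≥ 0}`, so
that the two spectral errors are `Tr[(I - Q)ρ]` and `Tr[R E(ρ)]`. Since `R` commutes with the
spectral projections of `σ`, `Tr[R E(ρ)] = Tr[Rρ]`. The pinching inequality `ρ ≤ d E(ρ)`, the bound
`R E(ρ) R ≤ c RσR ≤ c σ` and `ν Tr[Qσ] ≤ Tr[Qρ] ≤ 1` give `Tr[RQRρ] ≤ dc/ν`. Splitting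
`R = QR + (I - Q)R` and applying AM–GM to the semi-inner product `Tr[A ρ Bᴴ]` then yields
`Tr[Rρ] ≤ Tr[(I - Q)ρ] + 2√(dc/ν)`, and the error term tends to `0` because `(1/n) log d_n → 0`.
So every rate `a` admissible for `ρ⃗` makes every `b < a` admissible for `E(ρ⃗)`.
-/

open scoped MatrixOrder

lemma isHermitian_sub_ofReal_smul {ι : Type*} {A B : Matrix ι ι ℂ} (hA : A.IsHermitian)
    (hB : B.IsHermitian) (c : ℝ) : (A - (c : ℂ) • B).IsHermitian :=
  hA.sub (hB.smul (Complex.conj_ofReal c))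

section TraceInequalities

variable {ι : Type*} [Fintype ι]

lemma re_trace_nonneg {A : Matrix ι ι ℂ} (hA : A.PosSemidef) : 0 ≤ A.trace.re :=
  (Complex.nonneg_iff.mp hA.trace_nonneg).1

lemma re_trace_mul_nonneg {A B : Matrix ι ι ℂ} (hA : A.PosSemidef) (hB : B.PosSemidef) :
    0 ≤ (A * B).trace.re := by
  classical
  obtain ⟨C, rfl⟩ := CStarAlgebra.nonneg_iff_eq_star_mul_self.mp hA.nonneg
  rw [Matrix.star_eq_conjTranspose, Matrix.mul_assoc, Matrix.trace_mul_comm, Matrix.mul_assoc]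
  simpa [Matrix.mul_assoc] using re_trace_nonneg (hB.mul_mul_conjTranspose_same C)

lemma re_trace_mul_le_of_le {A B C : Matrix ι ι ℂ} (hC : C.PosSemidef) (hAB : A ≤ B) :
    (C * A).trace.re ≤ (C * B).trace.re := by
  have := re_trace_mul_nonneg hC (Matrix.le_iff.mp hAB)
  rw [Matrix.mul_sub, Matrix.trace_sub, Complex.sub_re] at this
  linarith

lemma two_mul_re_trace_le {ρ : Matrix ι ι ℂ} (hρ : ρ.PosSemidef) (A B : Matrix ι ι ℂ) {θ : ℝ}
    (hθ : 0 < θ) :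
    2 * (A * ρ * Bᴴ).trace.re ≤ θ * (A * ρ * Aᴴ).trace.re + θ⁻¹ * (B * ρ * Bᴴ).trace.re := by
  have hsq := re_trace_nonneg (hρ.mul_mul_conjTranspose_same ((θ : ℂ) • A - B))
  have hswap : (B * ρ * Aᴴ).trace.re = (A * ρ * Bᴴ).trace.re := by
    have : B * ρ * Aᴴ = (A * ρ * Bᴴ)ᴴ := by
      simp only [Matrix.conjTranspose_mul, Matrix.conjTranspose_conjTranspose, hρ.1.eq,
        Matrix.mul_assoc]
    rw [this, Matrix.trace_conjTranspose, Complex.star_def, Complex.conj_re]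
  have hexp : (((θ : ℂ) • A - B) * ρ * ((θ : ℂ) • A - B)ᴴ).trace.re =
      θ ^ 2 * (A * ρ * Aᴴ).trace.re - 2 * θ * (A * ρ * Bᴴ).trace.re + (B * ρ * Bᴴ).trace.re := by
    simp only [Matrix.conjTranspose_sub, Matrix.conjTranspose_smul, Complex.star_def,
      Complex.conj_ofReal, Matrix.sub_mul, Matrix.mul_sub, Matrix.smul_mul, Matrix.mul_smul,
      Matrix.trace_sub, Matrix.trace_smul, smul_eq_mul, Complex.sub_re, Complex.re_ofReal_mul,
      hswap]
    ring
  rw [hexp] at hsq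
  calc 2 * (A * ρ * Bᴴ).trace.re
      ≤ 2 * (A * ρ * Bᴴ).trace.re + (θ ^ 2 * (A * ρ * Aᴴ).trace.re
          - 2 * θ * (A * ρ * Bᴴ).trace.re + (B * ρ * Bᴴ).trace.re) / θ := by
        linarith [div_nonneg hsq hθ.le]
    _ = θ * (A * ρ * Aᴴ).trace.re + θ⁻¹ * (B * ρ * Bᴴ).trace.re := by
        field_simp
        ring

lemma trace_conj_eq_of_idempotent {A : Matrix ι ι ℂ} (hA : A.IsHermitian) (hAA : A * A = A)
    (ρ : Matrix ι ι ℂ) : (A * ρ * Aᴴ).trace = (A * ρ).trace := by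
  rw [hA.eq, Matrix.trace_mul_comm, ← Matrix.mul_assoc, hAA]

lemma nonempty_of_isDensityOp {ρ : Matrix ι ι ℂ} (hρ : IsDensityOp ρ) : Nonempty ι := by
  by_contra h
  rw [not_nonempty_iff] at h
  simpa [Matrix.trace] using hρ.2

end TraceInequalities

section SpectralProjections

variable {ι : Type*} [Fintype ι] [DecidableEq ι]

lemma continuousOn_spectrum (A : Matrix ι ι ℂ) (f : ℝ → ℝ) : ContinuousOn f (spectrum ℝ A) :=
  (Matrix.finite_real_spectrum (A := A)).continuousOn f

lemma isHermitian_cfc (f : ℝ → ℝ) (A : Matrix ι ι ℂ) : (cfc f A).IsHermitian :=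
  cfc_predicate f A

lemma cfc_indicator_mul_cfc_indicator (S T : Set ℝ) (A : Matrix ι ι ℂ) :
    cfc (S.indicator 1) A * cfc (T.indicator 1) A = cfc ((S ∩ T).indicator 1) A := by
  rw [← cfc_mul _ _ A (continuousOn_spectrum A _) (continuousOn_spectrum A _),
    Set.inter_indicator_one]
  rfl

lemma cfc_indicator_mul_self (S : Set ℝ) (A : Matrix ι ι ℂ) :
    cfc (S.indicator 1) A * cfc (S.indicator 1) A = cfc (S.indicator 1) A := by
  rw [cfc_indicator_mul_cfc_indicator, Set.inter_self]

lemma posSemidef_cfc_indicator (S : Set ℝ) (A : Matrix ι ι ℂ) :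
    (cfc (S.indicator 1) A).PosSemidef :=
  Matrix.nonneg_iff_posSemidef.mp <|
    cfc_nonneg fun x _ => Set.indicator_nonneg (fun _ _ => zero_le_one) x

lemma one_sub_cfc_indicator {A : Matrix ι ι ℂ} (hA : A.IsHermitian) (S : Set ℝ) :
    1 - cfc (S.indicator 1) A = cfc (Sᶜ.indicator 1) A := by
  rw [← cfc_one ℝ A hA.isSelfAdjoint,
    ← cfc_sub _ _ A (continuousOn_spectrum A _) (continuousOn_spectrum A _)]
  congr 1
  funext x
  by_cases hx : x ∈ S <;> simp [hx]

lemma nnProj_eq_cfc {X : Matrix ι ι ℂ} (hX : X.IsHermitian) :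
    nnProj X = cfc ((Set.Ici (0 : ℝ)).indicator 1) X := by
  rw [nnProj, dif_pos hX, hX.cfc_eq, Matrix.IsHermitian.cfc, Unitary.conjStarAlgAut_apply]
  congr 3
  funext i
  by_cases hi : 0 ≤ hX.eigenvalues i <;> simp [hi]

lemma one_sub_nnProj_eq_cfc {X : Matrix ι ι ℂ} (hX : X.IsHermitian) :
    1 - nnProj X = cfc ((Set.Iio (0 : ℝ)).indicator 1) X := by
  rw [nnProj_eq_cfc hX, one_sub_cfc_indicator hX, Set.compl_Ici]

lemma posSemidef_nnProj {X : Matrix ι ι ℂ} (hX : X.IsHermitian) : (nnProj X).PosSemidef := by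
  rw [nnProj_eq_cfc hX]
  exact posSemidef_cfc_indicator _ X

lemma posSemidef_one_sub_nnProj {X : Matrix ι ι ℂ} (hX : X.IsHermitian) :
    (1 - nnProj X).PosSemidef := by
  rw [one_sub_nnProj_eq_cfc hX]
  exact posSemidef_cfc_indicator _ X

lemma nonneg_nnProj_mul {X : Matrix ι ι ℂ} (hX : X.IsHermitian) : 0 ≤ nnProj X * X := by
  conv_rhs => rw [nnProj_eq_cfc hX]; enter [2]; rw [← cfc_id' ℝ X hX.isSelfAdjoint]
  rw [← cfc_mul _ _ X (continuousOn_spectrum X _) (continuousOn_spectrum X _)]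
  refine cfc_nonneg fun x _ => ?_
  by_cases hx : 0 ≤ x <;> simp [hx]

lemma one_sub_nnProj_mul_nonpos {X : Matrix ι ι ℂ} (hX : X.IsHermitian) :
    (1 - nnProj X) * X ≤ 0 := by
  conv_lhs => rw [one_sub_nnProj_eq_cfc hX]; enter [2]; rw [← cfc_id' ℝ X hX.isSelfAdjoint]
  rw [← cfc_mul _ _ X (continuousOn_spectrum X _) (continuousOn_spectrum X _)]
  refine cfc_nonpos _ _ fun x _ => ?_
  by_cases hx : x < 0
  · simp [hx, hx.le]
  · simp [hx]

lemma one_sub_nnProj_conj_nonpos {X : Matrix ι ι ℂ} (hX : X.IsHermitian) :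
    (1 - nnProj X) * X * (1 - nnProj X) ≤ 0 := by
  have hcomm : Commute (1 - nnProj X) X := by
    rw [one_sub_nnProj_eq_cfc hX]
    exact (Commute.refl X).cfc_real _
  have hidem : (1 - nnProj X) * (1 - nnProj X) = 1 - nnProj X := by
    rw [one_sub_nnProj_eq_cfc hX]
    exact cfc_indicator_mul_self _ _
  rw [Matrix.mul_assoc, ← hcomm.eq, ← Matrix.mul_assoc, hidem]
  exact one_sub_nnProj_mul_nonpos hX

lemma eigProjAt_eq_cfc {σ : Matrix ι ι ℂ} (hσ : σ.IsHermitian) (μ : ℝ) :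
    eigProjAt σ μ = cfc (({μ} : Set ℝ).indicator 1) σ := by
  rw [eigProjAt, dif_pos hσ, hσ.cfc_eq, Matrix.IsHermitian.cfc, Unitary.conjStarAlgAut_apply]
  congr 3
  funext i
  by_cases hi : hσ.eigenvalues i = μ <;> simp [hi]

end SpectralProjections

section EigenProjections

variable {ι : Type*} [Fintype ι] [DecidableEq ι] {σ : Matrix ι ι ℂ}

lemma isHermitian_eigProjAt (hσ : σ.IsHermitian) (μ : ℝ) : (eigProjAt σ μ).IsHermitian := by
  rw [eigProjAt_eq_cfc hσ]
  exact isHermitian_cfc _ σ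

lemma eigProjAt_mul_self (hσ : σ.IsHermitian) (μ : ℝ) :
    eigProjAt σ μ * eigProjAt σ μ = eigProjAt σ μ := by
  rw [eigProjAt_eq_cfc hσ, cfc_indicator_mul_self]

lemma eigProjAt_mul_eigProjAt_of_ne (hσ : σ.IsHermitian) {μ ν : ℝ} (h : μ ≠ ν) :
    eigProjAt σ μ * eigProjAt σ ν = 0 := by
  rw [eigProjAt_eq_cfc hσ, eigProjAt_eq_cfc hσ, cfc_indicator_mul_cfc_indicator,
    (Set.disjoint_singleton.mpr h).inter_eq, Set.indicator_empty]
  exact cfc_const_zero ℝ σ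

lemma sum_eigProjAt (hσ : σ.IsHermitian) :
    ∑ μ ∈ Finset.univ.image hσ.eigenvalues, eigProjAt σ μ = 1 := by
  simp_rw [eigProjAt_eq_cfc hσ]
  rw [← cfc_sum _ σ _ fun _ _ => continuousOn_spectrum σ _, ← cfc_one ℝ σ hσ.isSelfAdjoint]
  refine cfc_congr fun x hx => ?_
  obtain ⟨i, rfl⟩ := hσ.spectrum_real_eq_range_eigenvalues ▸ hx
  simp

lemma sum_smul_eigProjAt (hσ : σ.IsHermitian) :
    ∑ μ ∈ Finset.univ.image hσ.eigenvalues, (μ : ℂ) • eigProjAt σ μ = σ := by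
  have : ∀ μ : ℝ, (μ : ℂ) • eigProjAt σ μ = μ • eigProjAt σ μ := fun μ => by
    rw [← Complex.coe_smul]
  simp_rw [this, eigProjAt_eq_cfc hσ]
  simp_rw [← cfc_smul _ _ σ (continuousOn_spectrum σ _)]
  rw [← cfc_sum _ σ _ fun _ _ => continuousOn_spectrum σ _]
  conv_rhs => rw [← cfc_id' ℝ σ hσ.isSelfAdjoint]
  refine cfc_congr fun x hx => ?_
  obtain ⟨i, rfl⟩ := hσ.spectrum_real_eq_range_eigenvalues ▸ hx
  simp [Set.indicator_apply]

end EigenProjections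

section PinchingFamily

variable {ι α : Type*} [Fintype ι] {s : Finset α} {P : α → Matrix ι ι ℂ}

lemma posSemidef_card_smul_sum_conj_sub [DecidableEq ι] (hP : ∀ a ∈ s, (P a).IsHermitian)
    (hsum : ∑ a ∈ s, P a = 1) {ρ : Matrix ι ι ℂ} (hρ : ρ.PosSemidef) :
    ((s.card : ℂ) • ∑ a ∈ s, P a * ρ * P a - ρ).PosSemidef := by
  have hterm : ∀ a b, (P a - P b) * ρ * (P a - P b) =
      P a * ρ * P a + P b * ρ * P b - P a * ρ * P b - P b * ρ * P a := fun a b => by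
    noncomm_ring
  have hdouble : ∑ a ∈ s, ∑ b ∈ s, (P a - P b) * ρ * (P a - P b) =
      (2 : ℂ) • ((s.card : ℂ) • ∑ a ∈ s, P a * ρ * P a - ρ) := by
    have hdiag : ∑ _a ∈ s, ∑ b ∈ s, P b * ρ * P b = (s.card : ℂ) • ∑ b ∈ s, P b * ρ * P b := by
      rw [Finset.sum_const, Nat.cast_smul_eq_nsmul]
    have hdiag' : ∑ a ∈ s, ∑ _b ∈ s, P a * ρ * P a = (s.card : ℂ) • ∑ a ∈ s, P a * ρ * P a := by
      rw [Finset.smul_sum]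
      exact Finset.sum_congr rfl fun a _ => by rw [Finset.sum_const, Nat.cast_smul_eq_nsmul]
    have hcross : ∑ a ∈ s, ∑ b ∈ s, P a * ρ * P b = ρ := by
      simp only [← Finset.mul_sum, ← Finset.sum_mul, hsum, Matrix.mul_one, Matrix.one_mul]
    have hcross' : ∑ a ∈ s, ∑ b ∈ s, P b * ρ * P a = ρ := by
      rw [Finset.sum_comm, hcross]
    simp only [hterm, Finset.sum_add_distrib, Finset.sum_sub_distrib, hdiag, hdiag', hcross,
      hcross']
    module
  have hpsd : (∑ a ∈ s, ∑ b ∈ s, (P a - P b) * ρ * (P a - P b)).PosSemidef :=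
    Matrix.posSemidef_sum _ fun a ha => Matrix.posSemidef_sum _ fun b hb => by
      simpa only [((hP a ha).sub (hP b hb)).eq] using
        hρ.mul_mul_conjTranspose_same (P a - P b)
  rw [hdouble] at hpsd
  have hhalf := hpsd.smul (a := ((2⁻¹ : ℝ) : ℂ)) (Complex.zero_le_real.mpr (by norm_num))
  rwa [smul_smul, show ((2⁻¹ : ℝ) : ℂ) * 2 = 1 by push_cast; norm_num, one_smul] at hhalf

lemma trace_mul_sum_conj [DecidableEq ι] (hidem : ∀ a ∈ s, P a * P a = P a)
    (hsum : ∑ a ∈ s, P a = 1) {R : Matrix ι ι ℂ} (hR : ∀ a ∈ s, Commute R (P a))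
    (ρ : Matrix ι ι ℂ) :
    (R * ∑ a ∈ s, P a * ρ * P a).trace = (R * ρ).trace := by
  have hterm : ∀ a ∈ s, (R * (P a * ρ * P a)).trace = (R * P a * ρ).trace := fun a ha => by
    rw [← Matrix.mul_assoc, Matrix.trace_mul_comm, ← Matrix.mul_assoc, ← Matrix.mul_assoc,
      ← (hR a ha).eq, Matrix.mul_assoc R, hidem a ha]
  rw [Matrix.mul_sum, Matrix.trace_sum, Finset.sum_congr rfl hterm, ← Matrix.trace_sum,
    ← Finset.sum_mul, ← Finset.mul_sum, hsum, Matrix.mul_one]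

lemma commute_sum_conj (hidem : ∀ a, P a * P a = P a) (horth : ∀ a b, a ≠ b → P a * P b = 0)
    (ρ : Matrix ι ι ℂ) (b : α) : Commute (∑ a ∈ s, P a * ρ * P a) (P b) := by
  refine Commute.sum_left _ _ _ fun a _ => ?_
  by_cases hab : a = b
  · subst hab
    show P a * ρ * P a * P a = P a * (P a * ρ * P a)
    rw [Matrix.mul_assoc (P a * ρ), hidem, ← Matrix.mul_assoc (P a) (P a * ρ),
      ← Matrix.mul_assoc (P a) (P a), hidem]
  · show P a * ρ * P a * P b = P b * (P a * ρ * P a)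
    rw [Matrix.mul_assoc (P a * ρ), horth a b hab, ← Matrix.mul_assoc (P b) (P a * ρ),
      ← Matrix.mul_assoc (P b) (P a), horth b a (Ne.symm hab)]
    simp

end PinchingFamily

section Pinching

variable {ι : Type*} [Fintype ι] [DecidableEq ι] {σ : Matrix ι ι ℂ}

lemma pinch_eq_sum (hσ : σ.IsHermitian) (ρ : Matrix ι ι ℂ) :
    pinch σ ρ = ∑ μ ∈ Finset.univ.image hσ.eigenvalues, eigProjAt σ μ * ρ * eigProjAt σ μ :=
  dif_pos hσ

lemma distinctEigCount_eq_card (hσ : σ.IsHermitian) :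
    distinctEigCount σ = (Finset.univ.image hσ.eigenvalues).card :=
  dif_pos hσ

lemma le_distinctEigCount_smul_pinch (hσ : σ.IsHermitian) {ρ : Matrix ι ι ℂ}
    (hρ : ρ.PosSemidef) : ρ ≤ (distinctEigCount σ : ℂ) • pinch σ ρ := by
  rw [Matrix.le_iff, pinch_eq_sum hσ, distinctEigCount_eq_card hσ]
  exact posSemidef_card_smul_sum_conj_sub (fun μ _ => isHermitian_eigProjAt hσ μ)
    (sum_eigProjAt hσ) hρ

lemma commute_eigProjAt_self (hσ : σ.IsHermitian) (μ : ℝ) : Commute (eigProjAt σ μ) σ := by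
  rw [eigProjAt_eq_cfc hσ]
  exact (Commute.refl σ).cfc_real _

lemma commute_pinch_eigProjAt (hσ : σ.IsHermitian) (ρ : Matrix ι ι ℂ) (μ : ℝ) :
    Commute (pinch σ ρ) (eigProjAt σ μ) := by
  rw [pinch_eq_sum hσ]
  exact commute_sum_conj (eigProjAt_mul_self hσ) (fun _ _ => eigProjAt_mul_eigProjAt_of_ne hσ) ρ μ

lemma commute_self_of_forall_commute_eigProjAt (hσ : σ.IsHermitian) {B : Matrix ι ι ℂ}
    (hB : ∀ μ, Commute B (eigProjAt σ μ)) : Commute B σ := by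
  rw [← sum_smul_eigProjAt hσ]
  exact Commute.sum_right _ _ _ fun μ _ => (hB μ).smul_right _

lemma trace_mul_pinch (hσ : σ.IsHermitian) {R : Matrix ι ι ℂ}
    (hR : ∀ μ, Commute R (eigProjAt σ μ)) (ρ : Matrix ι ι ℂ) :
    (R * pinch σ ρ).trace = (R * ρ).trace := by
  rw [pinch_eq_sum hσ]
  exact trace_mul_sum_conj (fun μ _ => eigProjAt_mul_self hσ μ) (sum_eigProjAt hσ)
    (fun μ _ => hR μ) ρ

lemma posSemidef_pinch (hσ : σ.IsHermitian) {ρ : Matrix ι ι ℂ} (hρ : ρ.PosSemidef) :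
    (pinch σ ρ).PosSemidef := by
  rw [pinch_eq_sum hσ]
  exact Matrix.posSemidef_sum _ fun μ _ => by
    simpa only [(isHermitian_eigProjAt hσ μ).eq] using hρ.mul_mul_conjTranspose_same (eigProjAt σ μ)

lemma distinctEigCount_pos [Nonempty ι] (hσ : σ.IsHermitian) : 0 < distinctEigCount σ := by
  rw [distinctEigCount_eq_card hσ]
  exact (Finset.univ_nonempty.image _).card_pos

end Pinching

section SpectralTestError

variable {ι : Type*} [Fintype ι] [DecidableEq ι] {ρ σ : Matrix ι ι ℂ}

lemma specErr_nonneg (hρ : ρ.PosSemidef) (hσ : σ.IsHermitian) (μ : ℝ) : 0 ≤ specErr ρ σ μ :=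
  re_trace_mul_nonneg
    (posSemidef_one_sub_nnProj (isHermitian_sub_ofReal_smul hρ.isHermitian hσ μ)) hρ

lemma specErr_le_one (hρ : IsDensityOp ρ) (hσ : σ.IsHermitian) (μ : ℝ) : specErr ρ σ μ ≤ 1 := by
  have hQρ := re_trace_mul_nonneg
    (posSemidef_nnProj (isHermitian_sub_ofReal_smul hρ.1.isHermitian hσ μ)) hρ.1
  rw [specErr, Matrix.sub_mul, Matrix.one_mul, Matrix.trace_sub, hρ.2, Complex.sub_re,
    Complex.one_re]
  linarith

lemma conj_le_of_commute (hσ : σ.PosSemidef) {R : Matrix ι ι ℂ} (hR : R.IsHermitian)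
    (hRR : R * R = R) (hRσ : Commute R σ) : R * σ * R ≤ σ := by
  have hcompl : σ - R * σ * R = (1 - R) * σ * (1 - R)ᴴ := by
    rw [(Matrix.isHermitian_one.sub hR).eq]
    simp only [Matrix.sub_mul, Matrix.mul_sub, Matrix.one_mul, Matrix.mul_one, hRσ.eq,
      Matrix.mul_assoc, hRR]
    abel
  rw [Matrix.le_iff, hcompl]
  exact hσ.mul_mul_conjTranspose_same _

lemma re_trace_nnProj_mul_le_inv (hρ : IsDensityOp ρ) (hσ : σ.IsHermitian) {ν : ℝ} (hν : 0 < ν) :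
    (nnProj (ρ - (ν : ℂ) • σ) * σ).trace.re ≤ ν⁻¹ := by
  have hX := isHermitian_sub_ofReal_smul hρ.1.isHermitian hσ ν
  have hQX := re_trace_nonneg (Matrix.nonneg_iff_posSemidef.mp (nonneg_nnProj_mul hX))
  have hQρ := re_trace_mul_nonneg (posSemidef_one_sub_nnProj hX) hρ.1
  rw [Matrix.mul_sub, Matrix.mul_smul, Matrix.trace_sub, Matrix.trace_smul, smul_eq_mul,
    Complex.sub_re, Complex.re_ofReal_mul] at hQX
  rw [Matrix.sub_mul, Matrix.one_mul, Matrix.trace_sub, hρ.2, Complex.sub_re, Complex.one_re] at hQρ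
  calc (nnProj (ρ - (ν : ℂ) • σ) * σ).trace.re
      = ν⁻¹ * (ν * (nnProj (ρ - (ν : ℂ) • σ) * σ).trace.re) := by field_simp
    _ ≤ ν⁻¹ * 1 := by gcongr; linarith
    _ = ν⁻¹ := mul_one _

lemma re_trace_mul_le_of_re_trace_conj_le {Q R : Matrix ι ι ℂ} (hρ : IsDensityOp ρ)
    (hQ : Q.IsHermitian) (hQQ : Q * Q = Q) (hR : R.IsHermitian) (hRR : R * R = R) {δ : ℝ}
    (hδ : 0 < δ) (hRQR : (R * Q * R * ρ).trace.re ≤ δ) :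
    (R * ρ).trace.re ≤ ((1 - Q) * ρ).trace.re + 2 * √δ := by
  have h1Q : (1 - Q).IsHermitian := Matrix.isHermitian_one.sub hQ
  have h1Q1Q : (1 - Q) * (1 - Q) = 1 - Q := by
    rw [Matrix.sub_mul, Matrix.mul_sub, Matrix.mul_sub, hQQ]
    simp
  have hsplit : (R * ρ).trace.re = (Q * R * ρ).trace.re + (R * ρ * (1 - Q)ᴴ).trace.re := by
    rw [h1Q.eq, Matrix.trace_mul_comm (R * ρ),
      Matrix.mul_assoc Q, ← Complex.add_re, ← Matrix.trace_add, ← Matrix.add_mul, add_sub_cancel,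
      Matrix.one_mul]
  have hQRQ : (Q * R * ρ * (Q * R)ᴴ).trace.re = (R * Q * R * ρ).trace.re := by
    have hQQ' : ∀ X : Matrix ι ι ℂ, Q * (Q * X) = Q * X := fun X => by
      rw [← Matrix.mul_assoc, hQQ]
    rw [Matrix.conjTranspose_mul, hQ.eq, hR.eq, Matrix.trace_mul_comm]
    simp only [Matrix.mul_assoc, hQQ']
  have hsqrt : 0 < √δ := Real.sqrt_pos.mpr hδ
  have hoverlap := two_mul_re_trace_le hρ.1 (Q * R) 1 (inv_pos.mpr hsqrt)
  have hrest := two_mul_re_trace_le hρ.1 R (1 - Q) one_pos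
  simp only [hQRQ, Matrix.one_mul, Matrix.conjTranspose_one, Matrix.mul_one, hρ.2,
    Complex.one_re, inv_inv] at hoverlap
  rw [trace_conj_eq_of_idempotent hR hRR, trace_conj_eq_of_idempotent h1Q h1Q1Q] at hrest
  have hδ' : (√δ)⁻¹ * (R * Q * R * ρ).trace.re ≤ √δ := by
    calc (√δ)⁻¹ * (R * Q * R * ρ).trace.re ≤ (√δ)⁻¹ * δ := by gcongr
      _ = √δ := by rw [inv_mul_eq_div, Real.div_sqrt]
  linarith

lemma re_trace_conj_mul_le_of_conj_pinch_le {ρ : Matrix ι ι ℂ} (hρ : ρ.PosSemidef)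
    (hσ : σ.PosSemidef) {Q R : Matrix ι ι ℂ} (hQ : Q.PosSemidef) (hR : R.IsHermitian)
    (hRR : R * R = R) (hRP : ∀ μ, Commute R (eigProjAt σ μ)) {c : ℝ} (hc : 0 ≤ c)
    (hRER : R * pinch σ ρ * R ≤ (c : ℂ) • (R * σ * R)) :
    (R * Q * R * ρ).trace.re ≤ distinctEigCount σ * c * (Q * σ).trace.re := by
  have hσh := hσ.isHermitian
  have hRQR : (R * Q * R).PosSemidef := by
    simpa only [hR.eq] using hQ.mul_mul_conjTranspose_same R
  calc (R * Q * R * ρ).trace.re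
      ≤ (R * Q * R * ((distinctEigCount σ : ℂ) • pinch σ ρ)).trace.re :=
        re_trace_mul_le_of_le hRQR (le_distinctEigCount_smul_pinch hσh hρ)
    _ = distinctEigCount σ * (Q * (R * pinch σ ρ * R)).trace.re := by
        rw [Matrix.mul_smul, Matrix.trace_smul, show R * Q * R * pinch σ ρ =
          R * (Q * R * pinch σ ρ) by simp only [Matrix.mul_assoc], Matrix.trace_mul_comm R]
        simp [Matrix.mul_assoc]
    _ ≤ distinctEigCount σ * (Q * ((c : ℂ) • (R * σ * R))).trace.re := by
        gcongr _ * ?_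
        exact re_trace_mul_le_of_le hQ hRER
    _ = distinctEigCount σ * c * (Q * (R * σ * R)).trace.re := by
        rw [Matrix.mul_smul, Matrix.trace_smul, smul_eq_mul, Complex.re_ofReal_mul]
        ring
    _ ≤ distinctEigCount σ * c * (Q * σ).trace.re := by
        gcongr _ * ?_
        exact re_trace_mul_le_of_le hQ
          (conj_le_of_commute hσ hR hRR (commute_self_of_forall_commute_eigProjAt hσh hRP))

lemma specErr_pinch_le (hρ : IsDensityOp ρ) (hσ : σ.PosSemidef) {ν c : ℝ} (hν : 0 < ν)
    (hc : 0 < c) (hd : 0 < distinctEigCount σ) :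
    specErr (pinch σ ρ) σ c ≤ specErr ρ σ ν + 2 * √(distinctEigCount σ * c / ν) := by
  have hσh := hσ.isHermitian
  set E := pinch σ ρ
  set d := distinctEigCount σ
  have hX := isHermitian_sub_ofReal_smul hρ.1.isHermitian hσh ν
  have hY := isHermitian_sub_ofReal_smul (posSemidef_pinch hσh hρ.1).isHermitian hσh c
  set Q := nnProj (ρ - (ν : ℂ) • σ)
  set R := 1 - nnProj (E - (c : ℂ) • σ)
  have hQ : Q = cfc ((Set.Ici (0 : ℝ)).indicator 1) (ρ - (ν : ℂ) • σ) := nnProj_eq_cfc hX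
  have hR : R = cfc ((Set.Iio (0 : ℝ)).indicator 1) (E - (c : ℂ) • σ) :=
    one_sub_nnProj_eq_cfc hY
  have hQh : Q.IsHermitian := by rw [hQ]; exact isHermitian_cfc _ _
  have hQQ : Q * Q = Q := by rw [hQ]; exact cfc_indicator_mul_self _ _
  have hRh : R.IsHermitian := by rw [hR]; exact isHermitian_cfc _ _
  have hRR : R * R = R := by rw [hR]; exact cfc_indicator_mul_self _ _
  have hRP : ∀ μ, Commute R (eigProjAt σ μ) := fun μ => hR ▸ Commute.cfc_real
    ((commute_pinch_eigProjAt hσh ρ μ).sub_left ((commute_eigProjAt_self hσh μ).symm.smul_left _)) _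
  have hRER : R * E * R ≤ (c : ℂ) • (R * σ * R) := by
    rw [← sub_nonpos, show R * E * R - (c : ℂ) • (R * σ * R) = R * (E - (c : ℂ) • σ) * R by
      simp only [Matrix.mul_sub, Matrix.sub_mul, Matrix.mul_smul, Matrix.smul_mul]]
    exact one_sub_nnProj_conj_nonpos hY
  have hRQR : (R * Q * R * ρ).trace.re ≤ d * c / ν := calc
    (R * Q * R * ρ).trace.re ≤ d * c * (Q * σ).trace.re :=
        re_trace_conj_mul_le_of_conj_pinch_le hρ.1 hσ (posSemidef_nnProj hX) hRh hRR hRP hc.le hRER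
    _ ≤ d * c * ν⁻¹ := by
        gcongr
        exact re_trace_nnProj_mul_le_inv hρ hσh hν
    _ = d * c / ν := (div_eq_mul_inv _ _).symm
  calc specErr E σ c = (R * E).trace.re := rfl
    _ = (R * ρ).trace.re := by rw [trace_mul_pinch hσh hRP]
    _ ≤ specErr ρ σ ν + 2 * √(d * c / ν) :=
        re_trace_mul_le_of_re_trace_conj_le hρ hQh hQQ hRh hRR (by positivity) hRQR

end SpectralTestError

lemma tendsto_two_mul_sqrt_mul_exp_div_exp {d : ℕ → ℝ} (hd0 : ∀ n, 0 < d n)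
    (hd : Tendsto (fun n : ℕ => (1 / (n : ℝ)) * Real.log (d n)) atTop (nhds 0)) {a b : ℝ}
    (hba : b < a) :
    Tendsto (fun n : ℕ => 2 * √(d n * Real.exp (n * b) / Real.exp (n * a))) atTop (nhds 0) := by
  have hlog : Tendsto (fun n : ℕ => Real.log (d n) + n * (b - a)) atTop atBot := by
    refine (tendsto_natCast_atTop_atTop.atTop_mul_neg (sub_neg.mpr hba)
      (by simpa using hd.add_const (b - a))).congr' ?_
    filter_upwards [eventually_ne_atTop 0] with n hn
    field_simp
  have hratio :
      Tendsto (fun n : ℕ => d n * Real.exp (n * b) / Real.exp (n * a)) atTop (nhds 0) := by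
    refine (Real.tendsto_exp_atBot.comp hlog).congr fun n => ?_
    rw [Function.comp_apply, Real.exp_add, Real.exp_log (hd0 n), mul_sub, Real.exp_sub]
    ring
  simpa using hratio.sqrt.const_mul 2

lemma limsup_le_of_le_add_of_tendsto_zero {α : Type*} {l : Filter α} {f g η : α → ℝ} {ε : ℝ}
    (hg : IsCoboundedUnder (· ≤ ·) l g) (hf : IsBoundedUnder (· ≤ ·) l f)
    (hfg : ∀ x, g x ≤ f x + η x) (hη : Tendsto η l (nhds 0)) (hfε : limsup f l ≤ ε) :
    limsup g l ≤ ε := by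
  refine le_of_forall_gt_imp_ge_of_dense fun w hw => limsup_le_of_le hg ?_
  filter_upwards [eventually_lt_of_limsup_lt (hfε.trans_lt (by linarith : ε < (ε + w) / 2)) hf,
    hη.eventually_lt_const (by linarith : (0 : ℝ) < (w - ε) / 2)] with x hfx hηx
  linarith [hfg x]

lemma Dlow_le_Dlow_of_lt {Hn : ℕ → Type*} [∀ n, Fintype (Hn n)] [∀ n, DecidableEq (Hn n)]
    {ε : ℝ} {ρ σ ρ' σ' : (n : ℕ) → Matrix (Hn n) (Hn n) ℂ}
    (h : ∀ a b : ℝ, b < a →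
      limsup (fun n : ℕ => specErr (ρ n) (σ n) (Real.exp (n * a))) atTop ≤ ε →
      limsup (fun n : ℕ => specErr (ρ' n) (σ' n) (Real.exp (n * b))) atTop ≤ ε) :
    Dlow ε ρ σ ≤ Dlow ε ρ' σ' := by
  refine sSup_le ?_
  rintro _ ⟨a, ha, rfl⟩
  refine le_of_forall_lt_imp_le_of_dense fun x hx => ?_
  obtain ⟨b, hxb, hba⟩ := EReal.exists_between_coe_real hx
  exact hxb.le.trans (le_sSup ⟨b, h a b (EReal.coe_lt_coe_iff.mp hba) ha, rfl⟩)

theorem stmt15_general {Hn : ℕ → Type*} [∀ n, Fintype (Hn n)] [∀ n, DecidableEq (Hn n)]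
    (ρ σ : (n : ℕ) → Matrix (Hn n) (Hn n) ℂ)
    (hρ : ∀ n, IsDensityOp (ρ n)) (hσ : ∀ n, IsDensityOp (σ n))
    (hd : Filter.Tendsto
      (fun n : ℕ => (1 / (n : ℝ)) * Real.log (distinctEigCount (σ n)))
      Filter.atTop (nhds 0))
    (ε : ℝ) :
    Dlow ε ρ σ ≤ Dlow ε (fun n => pinch (σ n) (ρ n)) σ := by
  have hcount : ∀ n, 0 < distinctEigCount (σ n) := fun n =>
    haveI := nonempty_of_isDensityOp (hρ n)
    distinctEigCount_pos (hσ n).1.isHermitian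
  refine Dlow_le_Dlow_of_lt fun a b hba ha => limsup_le_of_le_add_of_tendsto_zero
    (isCoboundedUnder_le_of_le atTop fun n =>
      specErr_nonneg (posSemidef_pinch (hσ n).1.isHermitian (hρ n).1) (hσ n).1.isHermitian _)
    (isBoundedUnder_of ⟨1, fun n => specErr_le_one (hρ n) (hσ n).1.isHermitian _⟩)
    (fun n => specErr_pinch_le (hρ n) (hσ n).1 (Real.exp_pos _) (Real.exp_pos _) (hcount n))
    (tendsto_two_mul_sqrt_mul_exp_div_exp (fun n => Nat.cast_pos.mpr (hcount n)) hd hba) ha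

/-- **Pinching reduction (one direction).**
If the number of distinct eigenvalues of `σ_n` satisfies `(1/n) log d_n → 0`, then for
every `ε ∈ [0,1]`, `D̲(ε|ρ⃗‖σ⃗) ≤ D̲(ε|E(ρ⃗)‖σ⃗)` where `E_n` is the pinching map
with respect to `σ_n`. -/
theorem stmt15 {Hn : ℕ → Type*} [∀ n, Fintype (Hn n)] [∀ n, DecidableEq (Hn n)]
    (ρ σ : (n : ℕ) → Matrix (Hn n) (Hn n) ℂ)
    (hρ : ∀ n, IsDensityOp (ρ n)) (hσ : ∀ n, IsDensityOp (σ n))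
    (hd : Filter.Tendsto
      (fun n : ℕ => (1 / (n : ℝ)) * Real.log (distinctEigCount (σ n)))
      Filter.atTop (nhds 0))
    (ε : ℝ) (hε0 : 0 ≤ ε) (hε1 : ε ≤ 1) :
    Dlow ε ρ σ ≤ Dlow ε (fun n => pinch (σ n) (ρ n)) σ :=
  stmt15_general ρ σ hρ hσ hd ε
end
end
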